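/- Assume pr is exchangeable and satisfies weak projectability for G. Then for any a ∈ U and 1 ≤ k ≤ N (with all relevant events contingent): pr(H | Exact(k,U,F) ∧ F_a ∧ G_a) > pr(H | Exact(k,U,F)), pr(H | Exact(k,U,F) ∧ ¬F_a ∧ G_a) ≥ pr(H | Exact(k,U,F)), and pr(H | Exact(k,U,F) ∧ ¬F_a ∧ ¬G_a) ≤ pr(H | Exact(k,U,F)). -/

import Mathlib

open MeasureTheory ProbabilityTheory

/-- Complete description vectors: each individual is assigned whether it is `F`
(first component) and whether it is `G` (second component). -/
abbrev CDV (N : ℕ) := Fin N → Bool × Bool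

/-- The event that individual `b` satisfies `F`. -/
def Fev {N : ℕ} (b : Fin N) : Set (CDV N) := {ω | (ω b).1 = true}

/-- The event that individual `b` satisfies `G`. -/
def Gev {N : ℕ} (b : Fin N) : Set (CDV N) := {ω | (ω b).2 = true}

/-- The hypothesis `H`: every individual satisfying `F` also satisfies `G`. -/
def Hyp (N : ℕ) : Set (CDV N) := {ω | ∀ b : Fin N, (ω b).1 = true → (ω b).2 = true}

open MeasureTheory ProbabilityTheory

/-- The event `Z_{(C,F)}`: exactly the individuals in `C` satisfy `F`. -/
def Zev {N : ℕ} (C : Finset (Fin N)) : Set (CDV N) :=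
  {ω | ∀ b : Fin N, ((ω b).1 = true ↔ b ∈ C)}

/-- The event `Exact(k, U, F)`: exactly `k` individuals of the universe satisfy `F`. -/
def ExactEv (N k : ℕ) : Set (CDV N) :=
  ⋃ C ∈ Finset.univ.powersetCard k, Zev (N := N) C

/-- Substitution of a permutation `π` into propositions, replacing each individual `b`
by `π b`: `ρ^π = permCDV π ⁻¹' ρ`. -/
def permCDV {N : ℕ} (π : Equiv.Perm (Fin N)) : CDV N → CDV N :=
  fun ω b => ω (π b)

/-- The twelve single-individual predicates allowed in the class `Δ`
(`F`, `¬F`, `G`, `¬G`, the complete descriptions `F̄Ḡ`, `F̄G`, `FḠ`, `FG`,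
their relevant negations including `F→G = ¬FḠ`), together with the trivial
predicate (for undescribed individuals). -/
def allowedPreds : Set (Set (Bool × Bool)) :=
  { Set.univ,
    {p | p.1 = true}, {p | p.1 = false},
    {p | p.2 = true}, {p | p.2 = false},
    {p | p.1 = false ∧ p.2 = false}, {p | ¬(p.1 = false ∧ p.2 = false)},
    {p | p.1 = false ∧ p.2 = true}, {p | ¬(p.1 = false ∧ p.2 = true)},
    {p | p.1 = true ∧ p.2 = false},
    {p | p.1 = true → p.2 = true},
    {p | p.1 = true ∧ p.2 = true}, {p | ¬(p.1 = true ∧ p.2 = true)} }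

/-- The class `Δ` of admissible backgrounds: conjunctions of allowed
single-individual predicates, each about a distinct individual
(hence not linking properties of distinct individuals). -/
def IsDelta {N : ℕ} (D : Set (CDV N)) : Prop :=
  ∃ A : Fin N → Set (Bool × Bool),
    (∀ b, A b ∈ allowedPreds) ∧ D = {ω | ∀ b, ω b ∈ A b}

/-!
By exchangeability, conditioning on `Exact(k,U,F)`, alone or together with a description of `a`
that fixes whether `a` is `F`, is the same as conditioning on `Z_C` ("exactly the individuals of
`C` are `F`") for a single `C` of size `k`: `Exact(k,U,F)` is the disjoint union of the `Z_C`, and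
a permutation fixing `a` carries any admissible `Z_C` to any other.

Given `Z_C`, `H` says that every member of `C` is `G`. Weak projectability, applied along the
admissible backgrounds `Z_C ∧ G_{b₁} ∧ ⋯ ∧ G_{bⱼ}`, shows one conjunct at a time that `G_a` is
positively relevant to this conjunction, so `pr(H | Z_C ∧ G_a) ≥ pr(H | Z_C)`; by the law of total
probability `¬G_a` then cannot raise `pr(H | Z_C)`. If `a ∈ C`, then `H ∧ Z_C` entails `G_a`,
and the increase is strict because `Z_C ∧ ¬G_a` has positive probability.
-/

namespace ProbabilityTheory

open Set

variable {Ω : Type*} [MeasurableSpace Ω] {μ : Measure Ω} {s t u : Set Ω}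

theorem cond_biUnion_of_cond_eq [IsFiniteMeasure μ] {ι : Type*} {I : Finset ι} {s : ι → Set Ω}
    (hs : ∀ i ∈ I, MeasurableSet (s i)) (hdisj : (I : Set ι).PairwiseDisjoint s)
    (ht : MeasurableSet t) {r : ENNReal} (hr : ∀ i ∈ I, μ (s i) ≠ 0 → μ[t | s i] = r)
    (hI : μ (⋃ i ∈ I, s i) ≠ 0) :
    μ[t | ⋃ i ∈ I, s i] = r := by
  have hpiece : ∀ i ∈ I, μ (s i ∩ t) = r * μ (s i) := fun i hi => by
    rcases eq_or_ne (μ (s i)) 0 with h0 | h0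
    · simp [h0, measure_inter_null_of_null_left]
    · rw [← hr i hi h0, cond_mul_eq_inter (hs i hi)]
  rw [cond_apply (Finset.measurableSet_biUnion I hs), iUnion₂_inter,
    measure_biUnion_finset (hdisj.mono fun _ => inter_subset_left) fun i hi => (hs i hi).inter ht,
    Finset.sum_congr rfl hpiece, ← Finset.mul_sum, ← measure_biUnion_finset hdisj hs,
    mul_left_comm, ENNReal.inv_mul_cancel hI (measure_ne_top _ _), mul_one]

theorem cond_lt_cond_inter_of_inter_subset [IsFiniteMeasure μ] (hs : MeasurableSet s)
    (hu : MeasurableSet u) (htu : s ∩ t ⊆ u) (hst : μ (s ∩ t) ≠ 0) (hsu : μ (s ∩ uᶜ) ≠ 0) :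
    μ[t | s] < μ[t | s ∩ u] := by
  have hlt : μ (s ∩ u) < μ s := by
    rw [← measure_inter_add_sdiff s hu, sdiff_eq]
    exact ENNReal.lt_add_right (measure_ne_top _ _) hsu
  rw [cond_apply hs, cond_apply (hs.inter hu), inter_right_comm, inter_eq_left.mpr htu]
  exact ENNReal.mul_lt_mul_left hst (measure_ne_top _ _) (ENNReal.inv_lt_inv.mpr hlt)

theorem le_cond_comm [IsFiniteMeasure μ] (ht : MeasurableSet t) (hu : MeasurableSet u)
    (ht0 : μ t ≠ 0) (hu0 : μ u ≠ 0) : μ t ≤ μ[t | u] ↔ μ u ≤ μ[u | t] := by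
  have hmul {v w : Set Ω} (hw : MeasurableSet w) (hw0 : μ w ≠ 0) :
      μ v ≤ μ[v | w] ↔ μ v * μ w ≤ μ (w ∩ v) := by
    rw [← ENNReal.mul_le_mul_iff_left hw0 (measure_ne_top μ w), cond_mul_eq_inter hw]
  rw [hmul hu hu0, hmul ht ht0, inter_comm, mul_comm]

theorem cond_le_cond_inter_comm [IsFiniteMeasure μ] (hs : MeasurableSet s) (ht : MeasurableSet t)
    (hu : MeasurableSet u) (hst : μ (s ∩ t) ≠ 0) (hsu : μ (s ∩ u) ≠ 0) :
    μ[t | s] ≤ μ[t | s ∩ u] ↔ μ[u | s] ≤ μ[u | s ∩ t] := by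
  rw [← cond_cond_eq_cond_inter hs hu, ← cond_cond_eq_cond_inter hs ht]
  exact le_cond_comm ht hu (cond_pos_of_inter_ne_zero hs hst).ne'
    (cond_pos_of_inter_ne_zero hs hsu).ne'

theorem cond_compl_le_of_le_cond [IsProbabilityMeasure μ] (hu : MeasurableSet u)
    (h : μ t ≤ μ[t | u]) : μ[t | uᶜ] ≤ μ t := by
  rcases eq_or_ne (μ uᶜ) 0 with hq | hq
  · simp [cond_eq_zero_of_meas_eq_zero hq]
  have htotal := cond_add_cond_compl_eq (t := t) hu μ
  have hsum := prob_add_prob_compl (μ := μ) hu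
  rw [← ENNReal.toReal_le_toReal (measure_ne_top _ _) (measure_ne_top _ _)] at h ⊢
  have hq' : 0 < (μ uᶜ).toReal := ENNReal.toReal_pos hq (measure_ne_top _ _)
  rw [← ENNReal.toReal_eq_toReal_iff' (by finiteness) (measure_ne_top _ _), ENNReal.toReal_add
    (by finiteness) (by finiteness), ENNReal.toReal_mul, ENNReal.toReal_mul] at htotal
  rw [← ENNReal.toReal_eq_toReal_iff' (by finiteness) (by finiteness), ENNReal.toReal_add
    (by finiteness) (by finiteness), ENNReal.toReal_one] at hsum
  have hshift : (μ[t | uᶜ].toReal - (μ t).toReal) * (μ uᶜ).toReal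
      = (μ u).toReal * ((μ t).toReal - μ[t | u].toReal) := by
    linear_combination htotal - (μ t).toReal * hsum
  have hnonpos : (μ[t | uᶜ].toReal - (μ t).toReal) * (μ uᶜ).toReal ≤ 0 :=
    hshift ▸ mul_nonpos_of_nonneg_of_nonpos ENNReal.toReal_nonneg (sub_nonpos.mpr h)
  exact sub_nonpos.mp (nonpos_of_mul_nonpos_left hnonpos hq')

theorem cond_inter_compl_le_of_le_cond_inter [IsFiniteMeasure μ] (hs : MeasurableSet s)
    (hu : MeasurableSet u) (h : μ[t | s] ≤ μ[t | s ∩ u]) : μ[t | s ∩ uᶜ] ≤ μ[t | s] := by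
  rcases eq_or_ne (μ s) 0 with hs0 | hs0
  · simp [cond_eq_zero_of_meas_eq_zero (measure_mono_null inter_subset_left hs0)]
  have := cond_isProbabilityMeasure (μ := μ) hs0
  rw [← cond_cond_eq_cond_inter hs hu] at h
  rw [← cond_cond_eq_cond_inter hs hu.compl]
  exact cond_compl_le_of_le_cond hu h

end ProbabilityTheory

open Set

section Combinatorics

variable {β : Type*} [DecidableEq β]

theorem Finset.map_swap_eq_self {t : Finset β} {x y : β} (h : x ∈ t ↔ y ∈ t) :
    t.map (Equiv.swap x y).toEmbedding = t := by
  ext z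
  rw [Finset.mem_map_equiv, Equiv.symm_swap, Equiv.swap_apply_def]
  split_ifs with hzx hzy
  · exact hzx ▸ h.symm
  · exact hzy ▸ h
  · rfl

theorem Equiv.Perm.exists_map_finset_eq_of_fixed (s t : Finset β) (hcard : s.card = t.card)
    {a : β} (ha : a ∈ s ↔ a ∈ t) : ∃ σ : Equiv.Perm β, σ a = a ∧ s.map σ.toEmbedding = t := by
  obtain ⟨σ, hσ⟩ := Equiv.Perm.exists_map_finset_eq s t hcard
  have hσa : σ a ∈ t ↔ a ∈ t := by
    rw [← ha, ← hσ, Finset.mem_map_equiv, Equiv.symm_apply_apply]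
  refine ⟨σ.trans (Equiv.swap (σ a) a), Equiv.swap_apply_left _ _, ?_⟩
  rw [Equiv.trans_toEmbedding, ← Finset.map_map, hσ, Finset.map_swap_eq_self hσa]

end Combinatorics

variable {N : ℕ}

theorem preimage_permCDV_zev (π : Equiv.Perm (Fin N)) (C : Finset (Fin N)) :
    permCDV π ⁻¹' Zev C = Zev (C.map π.toEmbedding) := by
  ext ω
  simp only [mem_preimage, Zev, mem_ofPred_eq, Finset.mem_map_equiv, permCDV]
  exact π.forall_congr fun {b} => by rw [Equiv.symm_apply_apply]

@[simp]
theorem preimage_permCDV_fev (π : Equiv.Perm (Fin N)) (b : Fin N) :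
    permCDV π ⁻¹' Fev b = Fev (π b) := rfl

@[simp]
theorem preimage_permCDV_gev (π : Equiv.Perm (Fin N)) (b : Fin N) :
    permCDV π ⁻¹' Gev b = Gev (π b) := rfl

theorem preimage_permCDV_hyp (π : Equiv.Perm (Fin N)) : permCDV π ⁻¹' Hyp N = Hyp N := by
  ext ω
  exact π.forall_congr_right (q := fun b => (ω b).1 = true → (ω b).2 = true)

def Exchangeable (μ : Measure (CDV N)) : Prop :=
  ∀ (A B : Set (CDV N)) (π : Equiv.Perm (Fin N)),
    μ[A | B] = μ[permCDV π ⁻¹' A | permCDV π ⁻¹' B]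

def WeaklyProjectable (μ : Measure (CDV N)) : Prop :=
  ∀ (A : Set (Bool × Bool)) (a b : Fin N) (D : Set (CDV N)),
    IsDelta D → μ D ≠ 0 → μ ({ω | ω a ∈ A} ∩ D) ≠ 0 →
    μ[{ω : CDV N | ω b ∈ A} | {ω : CDV N | ω a ∈ A} ∩ D] ≥ μ[{ω : CDV N | ω b ∈ A} | D]

theorem zev_disjoint {C C' : Finset (Fin N)} (h : C ≠ C') : Disjoint (Zev C) (Zev C') :=
  disjoint_left.mpr fun _ h₁ h₂ => h (Finset.ext fun x => (h₁ x).symm.trans (h₂ x))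

theorem zev_subset_fev {C : Finset (Fin N)} {a : Fin N} (ha : a ∈ C) : Zev C ⊆ Fev a :=
  fun _ hω => (hω a).mpr ha

theorem zev_subset_compl_fev {C : Finset (Fin N)} {a : Fin N} (ha : a ∉ C) :
    Zev C ⊆ (Fev a)ᶜ :=
  fun _ hω hF => ha ((hω a).mp hF)

theorem mem_iff_subset_fev_of_zev_inter_nonempty {C : Finset (Fin N)} {a : Fin N}
    {B : Set (CDV N)} (hBa : B ⊆ Fev a ∨ B ⊆ (Fev a)ᶜ) (hne : (Zev C ∩ B).Nonempty) :
    a ∈ C ↔ B ⊆ Fev a := by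
  obtain ⟨ω, hωC, hωB⟩ := hne
  rcases hBa with hB | hB
  · exact iff_of_true ((hωC a).mp (hB hωB)) hB
  · exact iff_of_false (fun ha => hB hωB (zev_subset_fev ha hωC)) fun h => hB hωB (h hωB)

variable (μ : Measure (CDV N))

theorem cond_hyp_zev_inter_map (hexch : Exchangeable μ) (π : Equiv.Perm (Fin N))
    {B : Set (CDV N)} (hB : permCDV π ⁻¹' B = B) (C : Finset (Fin N)) :
    μ[Hyp N | Zev (C.map π.toEmbedding) ∩ B] = μ[Hyp N | Zev C ∩ B] := by
  rw [hexch (Hyp N) (Zev C ∩ B) π, preimage_permCDV_hyp, preimage_inter, preimage_permCDV_zev, hB]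

theorem cond_hyp_exactEv_inter_eq [IsFiniteMeasure μ] (hexch : Exchangeable μ) {k : ℕ}
    {B : Set (CDV N)} {C₀ : Finset (Fin N)} (hC₀ : C₀ ∈ Finset.univ.powersetCard k)
    (h0 : μ (Zev C₀ ∩ B) ≠ 0)
    (hB : ∀ C ∈ Finset.univ.powersetCard k, μ (Zev C ∩ B) ≠ 0 →
      ∃ π : Equiv.Perm (Fin N), permCDV π ⁻¹' B = B ∧ C₀.map π.toEmbedding = C) :
    μ[Hyp N | ExactEv N k ∩ B] = μ[Hyp N | Zev C₀ ∩ B] := by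
  rw [ExactEv, iUnion₂_inter]
  refine cond_biUnion_of_cond_eq (fun _ _ => .of_discrete)
    (fun C _ C' _ hne => (zev_disjoint hne).mono inter_subset_left inter_subset_left)
    .of_discrete (fun C hC hC0 => ?_)
    fun h => h0 <| measure_mono_null
      (Finset.subset_set_biUnion_of_mem (f := fun C => Zev C ∩ B) hC₀) h
  obtain ⟨π, hπ, rfl⟩ := hB C hC hC0
  exact cond_hyp_zev_inter_map μ hexch π hπ C₀

theorem exists_cond_hyp_exactEv_eq [IsFiniteMeasure μ] (hexch : Exchangeable μ)
    (hCournot : ∀ s : Set (CDV N), s.Nonempty → μ s ≠ 0) {k : ℕ} {a : Fin N} {B : Set (CDV N)}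
    (hBinv : ∀ π : Equiv.Perm (Fin N), π a = a → permCDV π ⁻¹' B = B)
    (hBa : B ⊆ Fev a ∨ B ⊆ (Fev a)ᶜ) (hne : (ExactEv N k ∩ B).Nonempty) :
    ∃ C : Finset (Fin N), (Zev C ∩ B).Nonempty ∧
      μ[Hyp N | ExactEv N k ∩ B] = μ[Hyp N | Zev C ∩ B] ∧
      μ[Hyp N | ExactEv N k] = μ[Hyp N | Zev C] := by
  obtain ⟨ω, hωE, hωB⟩ := hne
  obtain ⟨C₀, hC₀, hωC₀⟩ := mem_iUnion₂.mp hωE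
  have hcard : ∀ C ∈ (Finset.univ : Finset (Fin N)).powersetCard k, C₀.card = C.card :=
    fun C hC => by rw [Finset.mem_powersetCard_univ.mp hC, Finset.mem_powersetCard_univ.mp hC₀]
  have hne₀ : (Zev C₀ ∩ B).Nonempty := ⟨ω, hωC₀, hωB⟩
  refine ⟨C₀, hne₀, ?_, ?_⟩
  · refine cond_hyp_exactEv_inter_eq μ hexch hC₀ (hCournot _ hne₀) fun C hC hC0 => ?_
    have ha : a ∈ C₀ ↔ a ∈ C := (mem_iff_subset_fev_of_zev_inter_nonempty hBa hne₀).trans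
      (mem_iff_subset_fev_of_zev_inter_nonempty hBa (nonempty_of_measure_ne_zero hC0)).symm
    obtain ⟨π, hπa, hπ⟩ := Equiv.Perm.exists_map_finset_eq_of_fixed C₀ C (hcard C hC) ha
    exact ⟨π, hBinv π hπa, hπ⟩
  · simpa only [inter_univ] using cond_hyp_exactEv_inter_eq μ hexch (B := univ) hC₀
      (by simpa using hCournot _ ⟨ω, hωC₀⟩) fun C hC _ =>
        (Equiv.Perm.exists_map_finset_eq C₀ C (hcard C hC)).imp fun _ hπ => ⟨preimage_univ, hπ⟩

theorem zev_inter_hyp (C : Finset (Fin N)) : Zev C ∩ Hyp N = Zev C ∩ ⋂ b ∈ C, Gev b := by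
  ext ω
  simp only [mem_inter_iff, mem_iInter₂]
  exact and_congr_right fun hω => forall_congr' fun b => by rw [← hω b]; rfl

theorem isDelta_zev_inter_biInter_gev (C S : Finset (Fin N)) :
    IsDelta (Zev C ∩ ⋂ b ∈ S, Gev b) := by
  refine ⟨fun b => if b ∈ S then
      (if b ∈ C then {p | p.1 = true ∧ p.2 = true} else {p | p.1 = false ∧ p.2 = true})
    else (if b ∈ C then {p | p.1 = true} else {p | p.1 = false}), fun b => ?_, ?_⟩
  · dsimp only
    split_ifs <;> simp [allowedPreds]
  · ext ω
    simp only [Zev, Gev, mem_inter_iff, mem_iInter₂, mem_ofPred_eq, ← forall_and]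
    refine forall_congr' fun b => ?_
    split_ifs <;> simp [*]

def describe (C : Finset (Fin N)) (g : Fin N → Bool) : CDV N := fun b => (decide (b ∈ C), g b)

theorem describe_mem_zev (C : Finset (Fin N)) (g : Fin N → Bool) : describe C g ∈ Zev C :=
  fun b => by simp [describe]

variable [IsFiniteMeasure μ]

theorem cond_gev_zev_le_cond_gev_zev_inter_biInter (hPJ : WeaklyProjectable μ)
    (hCournot : ∀ s : Set (CDV N), s.Nonempty → μ s ≠ 0) (C S : Finset (Fin N)) (a : Fin N) :
    μ[Gev a | Zev C] ≤ μ[Gev a | Zev C ∩ ⋂ b ∈ S, Gev b] := by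
  induction S using Finset.induction_on with
  | empty => simp
  | insert b S _ ih =>
    set D := Zev C ∩ ⋂ b ∈ S, Gev b
    have hpos : ∀ c, μ (D ∩ Gev c) ≠ 0 := fun c =>
      hCournot _ ⟨describe C fun _ => true, ⟨describe_mem_zev C _, by simp [describe, Gev]⟩, rfl⟩
    have hpj : μ[Gev b | D] ≤ μ[Gev b | Gev a ∩ D] :=
      hPJ {p | p.2 = true} a b D (isDelta_zev_inter_biInter_gev C S)
        (fun h => hpos a (measure_mono_null inter_subset_left h))
        (by rw [inter_comm]; exact hpos a)
    have hD : Zev C ∩ ⋂ x ∈ insert b S, Gev x = D ∩ Gev b := by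
      rw [Finset.set_biInter_insert, inter_left_comm, inter_comm]
    rw [inter_comm] at hpj
    rw [hD]
    exact ih.trans ((cond_le_cond_inter_comm .of_discrete .of_discrete .of_discrete
      (hpos a) (hpos b)).mpr hpj)

theorem cond_hyp_zev_le_cond_hyp_zev_inter_gev (hPJ : WeaklyProjectable μ)
    (hCournot : ∀ s : Set (CDV N), s.Nonempty → μ s ≠ 0) (C : Finset (Fin N)) (a : Fin N) :
    μ[Hyp N | Zev C] ≤ μ[Hyp N | Zev C ∩ Gev a] := by
  have hhyp : μ (Zev C ∩ Hyp N) ≠ 0 :=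
    hCournot _ ⟨describe C fun _ => true, describe_mem_zev C _, fun _ _ => rfl⟩
  rw [cond_le_cond_inter_comm .of_discrete .of_discrete .of_discrete hhyp
    (hCournot (Zev C ∩ Gev a) ⟨describe C fun _ => true, describe_mem_zev C _, rfl⟩),
    zev_inter_hyp]
  exact cond_gev_zev_le_cond_gev_zev_inter_biInter μ hPJ hCournot C C a

theorem cond_hyp_zev_lt_cond_hyp_zev_inter_gev
    (hCournot : ∀ s : Set (CDV N), s.Nonempty → μ s ≠ 0) {C : Finset (Fin N)} {a : Fin N}
    (ha : a ∈ C) : μ[Hyp N | Zev C] < μ[Hyp N | Zev C ∩ Gev a] :=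
  cond_lt_cond_inter_of_inter_subset .of_discrete .of_discrete
    (fun _ ⟨hωC, hωH⟩ => hωH a (zev_subset_fev ha hωC))
    (hCournot _ ⟨describe C fun _ => true, describe_mem_zev C _, fun _ _ => rfl⟩)
    (hCournot _ ⟨describe C (· ≠ a), describe_mem_zev C _, by simp [describe, Gev]⟩)

theorem cond_hyp_zev_inter_compl_gev_le (hPJ : WeaklyProjectable μ)
    (hCournot : ∀ s : Set (CDV N), s.Nonempty → μ s ≠ 0) (C : Finset (Fin N)) (a : Fin N) :
    μ[Hyp N | Zev C ∩ (Gev a)ᶜ] ≤ μ[Hyp N | Zev C] :=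
  cond_inter_compl_le_of_le_cond_inter .of_discrete .of_discrete
    (cond_hyp_zev_le_cond_hyp_zev_inter_gev μ hPJ hCournot C a)

theorem exact_pj_nicod_general {N k : ℕ}
    (μ : Measure (CDV N)) [IsProbabilityMeasure μ]
    -- exchangeability: pr(A | B) = pr(A^π | B^π)
    (hexch : ∀ (A B : Set (CDV N)) (π : Equiv.Perm (Fin N)),
      μ[A | B] = μ[permCDV π ⁻¹' A | permCDV π ⁻¹' B])
    -- weak projectability (PJ) for single-individual predicates, in particular for G
    (hPJ : ∀ (A : Set (Bool × Bool)) (a b : Fin N) (D : Set (CDV N)),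
      IsDelta D → μ D ≠ 0 → μ ({ω | ω a ∈ A} ∩ D) ≠ 0 →
      μ[{ω : CDV N | ω b ∈ A} | {ω : CDV N | ω a ∈ A} ∩ D] ≥ μ[{ω : CDV N | ω b ∈ A} | D])
    -- Cournot's principle: contingent events have positive probability
    (hCournot : ∀ s : Set (CDV N), s.Nonempty → μ s ≠ 0)
    (a : Fin N)
    -- all relevant (conditioning) events are contingent
    (hc1 : (ExactEv N k ∩ (Fev a ∩ Gev a)).Nonempty)
    (hc2 : (ExactEv N k ∩ ((Fev a)ᶜ ∩ Gev a)).Nonempty)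
    (hc3 : (ExactEv N k ∩ ((Fev a)ᶜ ∩ (Gev a)ᶜ)).Nonempty) :
    μ[Hyp N | ExactEv N k ∩ (Fev a ∩ Gev a)] > μ[Hyp N | ExactEv N k] ∧
    μ[Hyp N | ExactEv N k ∩ ((Fev a)ᶜ ∩ Gev a)] ≥ μ[Hyp N | ExactEv N k] ∧
    μ[Hyp N | ExactEv N k ∩ ((Fev a)ᶜ ∩ (Gev a)ᶜ)] ≤ μ[Hyp N | ExactEv N k] := by
  refine ⟨?_, ?_, ?_⟩
  · obtain ⟨C, ⟨ω, hωC, hωF, -⟩, hB, hE⟩ := exists_cond_hyp_exactEv_eq μ hexch hCournot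
      (fun π hπ => by simp [hπ]) (.inl inter_subset_left) hc1
    have ha : a ∈ C := (hωC a).mp hωF
    rw [hB, hE, ← inter_assoc, inter_eq_left.mpr (zev_subset_fev ha)]
    exact cond_hyp_zev_lt_cond_hyp_zev_inter_gev μ hCournot ha
  · obtain ⟨C, ⟨ω, hωC, hωF, -⟩, hB, hE⟩ := exists_cond_hyp_exactEv_eq μ hexch hCournot
      (fun π hπ => by simp [hπ]) (.inr inter_subset_left) hc2
    rw [hB, hE, ← inter_assoc, inter_eq_left.mpr (zev_subset_compl_fev (mt (hωC a).mpr hωF))]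
    exact cond_hyp_zev_le_cond_hyp_zev_inter_gev μ hPJ hCournot C a
  · obtain ⟨C, ⟨ω, hωC, hωF, -⟩, hB, hE⟩ := exists_cond_hyp_exactEv_eq μ hexch hCournot
      (fun π hπ => by simp [hπ]) (.inr inter_subset_left) hc3
    rw [hB, hE, ← inter_assoc, inter_eq_left.mpr (zev_subset_compl_fev (mt (hωC a).mpr hωF))]
    exact cond_hyp_zev_inter_compl_gev_le μ hPJ hCournot C a

/-- Theorem 5: for an exchangeable measure satisfying weak
projectability, with background knowledge `Exact(k,U,F)`:
a black raven (`F_a ∧ G_a`) strictly confirms `H`, a black non-raven (`¬F_a ∧ G_a`)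
does not disconfirm `H`, and a non-black non-raven (`¬F_a ∧ ¬G_a`) does not confirm `H`. -/
theorem exact_pj_nicod {N k : ℕ} (hk1 : 1 ≤ k) (hk2 : k ≤ N)
    (μ : Measure (CDV N)) [IsProbabilityMeasure μ]
    -- exchangeability: pr(A | B) = pr(A^π | B^π)
    (hexch : ∀ (A B : Set (CDV N)) (π : Equiv.Perm (Fin N)),
      μ[A | B] = μ[permCDV π ⁻¹' A | permCDV π ⁻¹' B])
    -- weak projectability (PJ) for single-individual predicates, in particular for G
    (hPJ : ∀ (A : Set (Bool × Bool)) (a b : Fin N) (D : Set (CDV N)),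
      IsDelta D → μ D ≠ 0 → μ ({ω | ω a ∈ A} ∩ D) ≠ 0 →
      μ[{ω : CDV N | ω b ∈ A} | {ω : CDV N | ω a ∈ A} ∩ D] ≥ μ[{ω : CDV N | ω b ∈ A} | D])
    -- Cournot's principle: contingent events have positive probability
    (hCournot : ∀ s : Set (CDV N), s.Nonempty → μ s ≠ 0)
    (a : Fin N)
    -- all relevant (conditioning) events are contingent
    (hc1 : (ExactEv N k ∩ (Fev a ∩ Gev a)).Nonempty)
    (hc2 : (ExactEv N k ∩ ((Fev a)ᶜ ∩ Gev a)).Nonempty)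
    (hc3 : (ExactEv N k ∩ ((Fev a)ᶜ ∩ (Gev a)ᶜ)).Nonempty) :
    μ[Hyp N | ExactEv N k ∩ (Fev a ∩ Gev a)] > μ[Hyp N | ExactEv N k] ∧
    μ[Hyp N | ExactEv N k ∩ ((Fev a)ᶜ ∩ Gev a)] ≥ μ[Hyp N | ExactEv N k] ∧
    μ[Hyp N | ExactEv N k ∩ ((Fev a)ᶜ ∩ (Gev a)ᶜ)] ≤ μ[Hyp N | ExactEv N k] :=
  exact_pj_nicod_general μ hexch hPJ hCournot a hc1 hc2 hc3
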